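/- Let B be a totally sign-skew-symmetric n×n integer matrix satisfying the Assumption. Then every G-matrix of B is row sign-coherent: for every finite sequence w of mutation indices, each row of G_w^B is nonzero and has either all entries ≥ 0 or all entries ≤ 0. -/

import Mathlib

/-!
The proof follows Nakanishi–Zelevinsky. By the second duality `G_w^B = (C_{w⁻¹}^{B_wᵀ})ᵀ`, where
`w⁻¹` is the reversed word, the `i`-th row of `G_w^B` is the `i`-th column of a `C`-matrix of
`B_wᵀ`, which is sign-coherent by the Assumption.

Once the `k`-th column of `C_w` is sign-coherent with sign `ε`, the recursions read
`C_{w·k} = C_w F_ε` and `G_{w·k} = G_w E_ε`, where `E_ε² = 1` and `μ_k(B_w) = E_ε B_w F_ε`; this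
gives at once the first duality `B C_w = G_w B_w` and `G_w^B (C_w^{-Bᵀ})ᵀ = 1`. The second
duality is proved by induction on the length of `w`, together with the formula
`C_{l·v}^B = F_σ C_v^{μ_l B}` for mutating the initial matrix. In the induction step the only
nontrivial case is a sign flip of a column of `C`; the two dualities then force that column of `C`
and the corresponding row of `G` to be `±` unit vectors, and both sides agree by a direct
computation. Since the induction passes through `-Bᵀ` and through transposes of mutations of `B`,
everything is done for a class of matrices closed under mutation, negation and transposition.
-/

open Matrix

/-- Mutation of an integer matrix at index `k`. -/
def mutB {n : ℕ} (B : Matrix (Fin n) (Fin n) ℤ) (k : Fin n) : Matrix (Fin n) (Fin n) ℤ :=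
  Matrix.of fun i j =>
    if i = k ∨ j = k then -B i j
    else B i j + (B i k).sign * max (B i k * B k j) 0

/-- Sign-skew-symmetric matrix. -/
def SignSkew {n : ℕ} (B : Matrix (Fin n) (Fin n) ℤ) : Prop :=
  ∀ i j, B i j * B j i ≤ 0 ∧ (B i j * B j i = 0 → B i j = 0 ∧ B j i = 0)

/-- Entrywise positive part `[A]₊`. -/
def matPos {n : ℕ} (A : Matrix (Fin n) (Fin n) ℤ) : Matrix (Fin n) (Fin n) ℤ :=
  Matrix.of fun i j => max (A i j) 0

/-- `A^{k·}`: agrees with `A` in row `k`, zero elsewhere. -/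
def rowSel {n : ℕ} (A : Matrix (Fin n) (Fin n) ℤ) (k : Fin n) : Matrix (Fin n) (Fin n) ℤ :=
  Matrix.of fun i j => if i = k then A i j else 0

/-- `A^{·k}`: agrees with `A` in column `k`, zero elsewhere. -/
def colSel {n : ℕ} (A : Matrix (Fin n) (Fin n) ℤ) (k : Fin n) : Matrix (Fin n) (Fin n) ℤ :=
  Matrix.of fun i j => if j = k then A i j else 0

/-- `J_k`: identity matrix with the `(k,k)` entry replaced by `-1`. -/
def Jmat (n : ℕ) (k : Fin n) : Matrix (Fin n) (Fin n) ℤ :=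
  Matrix.of fun i j => if i = j then (if i = k then -1 else 1) else 0

/-- One mutation step on a triple `(B_w, C_w, G_w)`, with fixed initial matrix `B0`:
`B_{w·k} = μ_k(B_w)`, `C_{w·k} = C_w (J_k + [B_w]₊^{k·}) + [-C_w]₊^{·k} B_w`,
`G_{w·k} = G_w (J_k + [-B_w]₊^{·k}) - B0 [-C_w]₊^{·k}`. -/
def BCGstep {n : ℕ} (B0 : Matrix (Fin n) (Fin n) ℤ)
    (s : Matrix (Fin n) (Fin n) ℤ × Matrix (Fin n) (Fin n) ℤ × Matrix (Fin n) (Fin n) ℤ)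
    (k : Fin n) :
    Matrix (Fin n) (Fin n) ℤ × Matrix (Fin n) (Fin n) ℤ × Matrix (Fin n) (Fin n) ℤ :=
  (mutB s.1 k,
   s.2.1 * (Jmat n k + rowSel (matPos s.1) k) + colSel (matPos (-s.2.1)) k * s.1,
   s.2.2 * (Jmat n k + colSel (matPos (-s.1)) k) - B0 * colSel (matPos (-s.2.1)) k)

/-- The triple `(B_w, C_w, G_w)` associated to a mutation sequence `w`
(entries of `w` are applied from left to right). -/
def BCG {n : ℕ} (B : Matrix (Fin n) (Fin n) ℤ) (w : List (Fin n)) :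
    Matrix (Fin n) (Fin n) ℤ × Matrix (Fin n) (Fin n) ℤ × Matrix (Fin n) (Fin n) ℤ :=
  w.foldl (BCGstep B) (B, 1, 1)

/-- The exchange matrix `B_w` of `B` at the sequence `w`. -/
def Bmat {n : ℕ} (B : Matrix (Fin n) (Fin n) ℤ) (w : List (Fin n)) :
    Matrix (Fin n) (Fin n) ℤ := (BCG B w).1

/-- The `C`-matrix `C_w^B`. -/
def Cmat {n : ℕ} (B : Matrix (Fin n) (Fin n) ℤ) (w : List (Fin n)) :
    Matrix (Fin n) (Fin n) ℤ := (BCG B w).2.1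

/-- The `G`-matrix `G_w^B`. -/
def Gmat {n : ℕ} (B : Matrix (Fin n) (Fin n) ℤ) (w : List (Fin n)) :
    Matrix (Fin n) (Fin n) ℤ := (BCG B w).2.2

/-- Totally sign-skew-symmetric: every matrix obtained from `B` by a finite sequence of
mutations is sign-skew-symmetric. -/
def TotSSS {n : ℕ} (B : Matrix (Fin n) (Fin n) ℤ) : Prop :=
  ∀ w : List (Fin n), SignSkew (Bmat B w)

/-- The `j`-th column of `A` is sign-coherent with sign `ε`. -/
def ColHasSign {n : ℕ} (A : Matrix (Fin n) (Fin n) ℤ) (j : Fin n) (ε : ℤ) : Prop :=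
  (∃ i, A i j ≠ 0) ∧ ((ε = 1 ∧ ∀ i, 0 ≤ A i j) ∨ (ε = -1 ∧ ∀ i, A i j ≤ 0))

/-- The `j`-th column of `A` is sign-coherent. -/
def ColSignCoherent {n : ℕ} (A : Matrix (Fin n) (Fin n) ℤ) (j : Fin n) : Prop :=
  ∃ ε : ℤ, ColHasSign A j ε

/-- The `i`-th row of `A` is sign-coherent with sign `ε`. -/
def RowHasSign {n : ℕ} (A : Matrix (Fin n) (Fin n) ℤ) (i : Fin n) (ε : ℤ) : Prop :=
  (∃ j, A i j ≠ 0) ∧ ((ε = 1 ∧ ∀ j, 0 ≤ A i j) ∨ (ε = -1 ∧ ∀ j, A i j ≤ 0))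

/-- The **Assumption**: for every matrix `B₀` obtained from `B` or `-B` by a finite
sequence of mutations, every sequence `w` and every index `k`, the `k`-th columns of
`C_w^{B₀}` and `C_w^{-B₀ᵀ}` are both sign-coherent with the same sign. -/
def TheAssumption {n : ℕ} (B : Matrix (Fin n) (Fin n) ℤ) : Prop :=
  ∀ B0 : Matrix (Fin n) (Fin n) ℤ,
    ((∃ v : List (Fin n), B0 = Bmat B v) ∨ (∃ v : List (Fin n), B0 = Bmat (-B) v)) →
    ∀ (w : List (Fin n)) (k : Fin n),
      ∃ ε : ℤ, ColHasSign (Cmat B0 w) k ε ∧ ColHasSign (Cmat (-B0ᵀ) w) k ε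

abbrev Mat (n : ℕ) := Matrix (Fin n) (Fin n) ℤ

variable {n : ℕ}

lemma Int.sign_mul_max_mul (x y : ℤ) :
    x.sign * max (x * y) 0 = max x 0 * max y 0 - max (-x) 0 * max (-y) 0 := by
  rcases lt_trichotomy x 0 with hx | rfl | hx
  · rw [Int.sign_eq_neg_one_of_neg hx]
    simp only [max_def]; split_ifs <;> nlinarith
  · simp
  · rw [Int.sign_eq_one_of_pos hx]
    simp only [max_def]; split_ifs <;> nlinarith

lemma Int.mul_max_add_max_mul (x y : ℤ) :
    x * max y 0 + max (-x) 0 * y = x.sign * max (x * y) 0 := by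
  rw [Int.sign_mul_max_mul]
  simp only [max_def]; split_ifs <;> nlinarith

lemma Int.mul_max_add_max_neg_mul {ε c : ℤ} (hε : ε = 1 ∨ ε = -1) (hc : 0 ≤ ε * c) (b : ℤ) :
    c * max b 0 + max (-c) 0 * b = c * max (ε * b) 0 := by
  rcases hε with rfl | rfl <;> simp only [max_def] <;> split_ifs <;> nlinarith

lemma rowSel_eq_single_mul (A : Mat n) (k : Fin n) : rowSel A k = single k k 1 * A := by
  ext i j
  by_cases h : i = k <;> simp [rowSel, h]

lemma colSel_eq_mul_single (A : Mat n) (k : Fin n) : colSel A k = A * single k k 1 := by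
  ext i j
  by_cases h : j = k <;> simp [colSel, h]

lemma rowSel_mul (A C : Mat n) (p : Fin n) : rowSel A p * C = rowSel (A * C) p := by
  rw [rowSel_eq_single_mul, rowSel_eq_single_mul, mul_assoc]

lemma colSel_mul_apply (A : Mat n) (k : Fin n) (X : Mat n) (i j : Fin n) :
    (colSel A k * X) i j = A i k * X k j := by
  simp [colSel, mul_apply]

lemma mul_rowSel_apply (A : Mat n) (k : Fin n) (X : Mat n) (i j : Fin n) :
    (X * rowSel A k) i j = X i k * A k j := by
  simp [rowSel, mul_apply]

lemma Jmat_eq (k : Fin n) : Jmat n k = 1 - 2 • single k k 1 := by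
  ext i j
  by_cases h : i = j <;> by_cases h' : i = k <;>
    simp [Jmat, one_apply, single_apply, h, h'] <;> grind

lemma Jmat_mul_apply (k : Fin n) (X : Mat n) (i j : Fin n) :
    (Jmat n k * X) i j = if i = k then -X k j else X i j := by
  by_cases h : i = k <;> simp [Jmat, mul_apply, h]

lemma mul_Jmat_apply (k : Fin n) (X : Mat n) (i j : Fin n) :
    (X * Jmat n k) i j = if j = k then -X i k else X i j := by
  by_cases h : j = k <;> simp [Jmat, mul_apply, h]

lemma matPos_neg_add (B : Mat n) : matPos (-B) + B = matPos B := by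
  ext i j
  simp only [matPos, Matrix.add_apply, Matrix.neg_apply, of_apply]
  omega

lemma mutB_neg (B : Mat n) (k : Fin n) : mutB (-B) k = -mutB B k := by
  ext i j
  by_cases h : i = k ∨ j = k <;> simp [mutB, h]
  ring

lemma mutB_transpose (B : Mat n) (k : Fin n) : mutB Bᵀ k = (mutB B k)ᵀ := by
  ext i j
  by_cases h : i = k ∨ j = k
  · simp [mutB, h, or_comm]
  · simp only [mutB, of_apply, transpose_apply, if_neg h, if_neg (Or.comm.not.mp h)]
    rw [Int.sign_mul_max_mul, Int.sign_mul_max_mul]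
    ring

lemma mutB_neg_transpose (B : Mat n) (k : Fin n) : mutB (-Bᵀ) k = -(mutB B k)ᵀ := by
  rw [mutB_neg, mutB_transpose]

lemma mutB_mutB (B : Mat n) (k : Fin n) : mutB (mutB B k) k = B := by
  ext i j
  by_cases h : i = k ∨ j = k
  · simp [mutB, h]
  · simp only [mutB, of_apply, if_neg h, true_or, or_true, if_true, neg_mul_neg, Int.sign_neg]
    ring

lemma rowSel_mutB (B : Mat n) (k : Fin n) : rowSel (mutB B k) k = -rowSel B k := by
  ext i j
  by_cases hi : i = k <;> simp [rowSel, mutB, hi]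

/-- Nakanishi–Zelevinsky's matrices `E_ε = J_k + [-εB]₊^{·k}` and `F_ε = J_k + [εB]₊^{k·}`. -/
def mutE (k : Fin n) (ε : ℤ) (B : Mat n) : Mat n := Jmat n k + colSel (matPos (-ε • B)) k

def mutF (k : Fin n) (ε : ℤ) (B : Mat n) : Mat n := Jmat n k + rowSel (matPos (ε • B)) k

lemma mutB_eq_mutE_mul_mul_mutF_one {B : Mat n} {k : Fin n} (hk : B k k = 0) :
    mutB B k = mutE k 1 B * B * mutF k 1 B := by
  ext i j
  simp only [mutE, mutF, add_mul, mul_add, Matrix.add_apply, Jmat_mul_apply, mul_Jmat_apply,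
    colSel_mul_apply, mul_rowSel_apply, matPos, of_apply, mutB, neg_smul, one_smul,
    Matrix.smul_apply]
  by_cases hi : i = k <;> by_cases hj : j = k <;> simp [hi, hj, hk]
  rw [← Int.mul_max_add_max_mul]
  ring

lemma mutB_eq_mutE_mul_mul_mutF {B : Mat n} {k : Fin n} (hk : B k k = 0) {ε : ℤ}
    (hε : ε = 1 ∨ ε = -1) : mutB B k = mutE k ε B * B * mutF k ε B := by
  rcases hε with rfl | rfl
  · exact mutB_eq_mutE_mul_mul_mutF_one hk
  · have hk' : (-B) k k = 0 := by simp [hk]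
    rw [← neg_neg B, mutB_neg, mutB_eq_mutE_mul_mul_mutF_one hk']
    simp [mutE, mutF]

lemma Jmat_add_colSel_mul_self {Y : Mat n} {k : Fin n} (hY : Y k k = 0) :
    (Jmat n k + colSel Y k) * (Jmat n k + colSel Y k) = 1 := by
  set E : Mat n := single k k 1
  have hEE : E * E = E := by simp [E]
  have hEYE : E * Y * E = 0 := by simp [E, hY]
  rw [Jmat_eq, colSel_eq_mul_single]
  calc (1 - 2 • E + Y * E) * (1 - 2 • E + Y * E)
      = 1 + 4 • (E * E - E) + 2 • (Y * E - Y * (E * E)) - 2 • (E * Y * E)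
          + Y * (E * Y * E) := by noncomm_ring
    _ = 1 := by simp [hEE, hEYE]

lemma mutE_mul_self {B : Mat n} {k : Fin n} (hk : B k k = 0) (ε : ℤ) :
    mutE k ε B * mutE k ε B = 1 :=
  Jmat_add_colSel_mul_self (by simp [matPos, hk])

lemma mutE_neg_neg (k : Fin n) (ε : ℤ) (B : Mat n) : mutE k (-ε) (-B) = mutE k ε B := by
  simp [mutE]

lemma transpose_mutF (k : Fin n) (ε : ℤ) (B : Mat n) : (mutF k ε B)ᵀ = mutE k (-ε) Bᵀ := by
  ext i j
  by_cases hi : i = j <;> simp [mutF, mutE, Jmat, rowSel, colSel, matPos, hi, eq_comm]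

lemma mutF_mutB (k : Fin n) (ε : ℤ) (B : Mat n) : mutF k ε (mutB B k) = mutF k (-ε) B := by
  ext i j
  by_cases hi : i = k <;> simp [mutF, rowSel, matPos, mutB, hi]

lemma mutF_eq_mutF_neg_add (k : Fin n) (ε : ℤ) (B : Mat n) :
    mutF k ε B = mutF k (-ε) B + ε • rowSel B k := by
  ext i j
  by_cases hi : i = k <;> simp [mutF, rowSel, matPos, hi]
  generalize ε * B k j = x
  omega

lemma mutF_mul_single {B : Mat n} {l : Fin n} (hB : B l l = 0) (ε : ℤ) (m : Fin n) :
    mutF l ε B * single l m 1 = -single l m 1 := by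
  rw [mutF, add_mul, rowSel_eq_single_mul, Jmat_eq]
  simp [sub_mul, add_mul, two_smul, matPos, hB]

lemma single_mul_mul_mutF {B : Mat n} {m : Fin n} (hB : B m m = 0) (l : Fin n) (ε : ℤ) :
    single l m 1 * B * mutF m ε B = single l m 1 * B := by
  rw [mutF, mul_add, rowSel_eq_single_mul, Jmat_eq, ← mul_assoc]
  simp [mul_sub, hB]

lemma Bmat_nil (M : Mat n) : Bmat M [] = M := rfl

lemma Cmat_nil (M : Mat n) : Cmat M [] = 1 := rfl

lemma Gmat_nil (M : Mat n) : Gmat M [] = 1 := rfl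

lemma Bmat_eq_foldl (M : Mat n) (w : List (Fin n)) : Bmat M w = w.foldl mutB M := by
  suffices ∀ s : Mat n × Mat n × Mat n, (w.foldl (BCGstep M) s).1 = w.foldl mutB s.1 from this _
  induction w with
  | nil => exact fun _ => rfl
  | cons k w ih => exact fun s => ih _

lemma Bmat_append (M : Mat n) (u v : List (Fin n)) : Bmat M (u ++ v) = Bmat (Bmat M u) v := by
  simp [Bmat_eq_foldl]

lemma Bmat_concat (M : Mat n) (w : List (Fin n)) (k : Fin n) :
    Bmat M (w ++ [k]) = mutB (Bmat M w) k := by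
  simp [Bmat_eq_foldl]

lemma Bmat_cons (M : Mat n) (k : Fin n) (w : List (Fin n)) :
    Bmat M (k :: w) = Bmat (mutB M k) w := by
  simp [Bmat_eq_foldl]

lemma Bmat_neg (M : Mat n) (w : List (Fin n)) : Bmat (-M) w = -Bmat M w := by
  induction w using List.reverseRecOn with
  | nil => rfl
  | append_singleton w k ih => rw [Bmat_concat, Bmat_concat, ih, mutB_neg]

lemma Bmat_transpose (M : Mat n) (w : List (Fin n)) : Bmat Mᵀ w = (Bmat M w)ᵀ := by
  induction w using List.reverseRecOn with
  | nil => rfl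
  | append_singleton w k ih => rw [Bmat_concat, Bmat_concat, ih, mutB_transpose]

lemma Bmat_neg_transpose (M : Mat n) (w : List (Fin n)) : Bmat (-Mᵀ) w = -(Bmat M w)ᵀ := by
  rw [← transpose_neg, Bmat_transpose, Bmat_neg, transpose_neg]

lemma Bmat_reverse (M : Mat n) (w : List (Fin n)) : Bmat (Bmat M w) w.reverse = M := by
  induction w generalizing M with
  | nil => rfl
  | cons k w ih => rw [List.reverse_cons, Bmat_cons, Bmat_append, ih, Bmat_cons, mutB_mutB]; rfl

lemma Cmat_concat (M : Mat n) (w : List (Fin n)) (k : Fin n) :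
    Cmat M (w ++ [k]) = Cmat M w * (Jmat n k + rowSel (matPos (Bmat M w)) k)
      + colSel (matPos (-Cmat M w)) k * Bmat M w := by
  simp [Cmat, Bmat, BCG, BCGstep]

lemma Gmat_concat (M : Mat n) (w : List (Fin n)) (k : Fin n) :
    Gmat M (w ++ [k]) = Gmat M w * (Jmat n k + colSel (matPos (-Bmat M w)) k)
      - M * colSel (matPos (-Cmat M w)) k := by
  simp [Gmat, Cmat, Bmat, BCG, BCGstep]

lemma ColHasSign.sign_eq {A : Mat n} {j : Fin n} {ε : ℤ} (h : ColHasSign A j ε) :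
    ε = 1 ∨ ε = -1 := by
  obtain ⟨-, ⟨rfl, -⟩ | ⟨rfl, -⟩⟩ := h <;> simp

lemma ColHasSign.mul_nonneg {A : Mat n} {j : Fin n} {ε : ℤ} (h : ColHasSign A j ε) (i : Fin n) :
    0 ≤ ε * A i j := by
  obtain ⟨-, ⟨rfl, h⟩ | ⟨rfl, h⟩⟩ := h <;> linarith [h i]

lemma ColHasSign.eq {A : Mat n} {j : Fin n} {ε ε' : ℤ} (h : ColHasSign A j ε)
    (h' : ColHasSign A j ε') : ε = ε' := by
  obtain ⟨i, hi⟩ := h.1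
  have := h.mul_nonneg i
  have := h'.mul_nonneg i
  rcases h.sign_eq with rfl | rfl <;> rcases h'.sign_eq with rfl | rfl <;> omega

lemma ColHasSign.eq_neg_of_ne {A A' : Mat n} {j j' : Fin n} {ε ε' : ℤ} (h : ColHasSign A j ε)
    (h' : ColHasSign A' j' ε') (hne : ε ≠ ε') : ε' = -ε := by
  rcases h.sign_eq with rfl | rfl <;> rcases h'.sign_eq with rfl | rfl <;> omega

lemma ColHasSign.mul_eq_one {A : Mat n} {j : Fin n} {ε : ℤ} (h : ColHasSign A j ε) {i : Fin n}
    (hu : IsUnit (A i j)) : ε * A i j = 1 := by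
  have := h.mul_nonneg i
  rcases h.sign_eq with rfl | rfl <;> rcases Int.isUnit_iff.mp hu with hA | hA <;>
    simp only [hA] at this ⊢ <;> omega

lemma colHasSign_one (k : Fin n) : ColHasSign (1 : Mat n) k 1 :=
  ⟨⟨k, by simp⟩, Or.inl ⟨rfl, fun i => by by_cases h : i = k <;> simp [one_apply, h]⟩⟩

lemma Cmat_concat_of_colHasSign {M : Mat n} {w : List (Fin n)} {k : Fin n} {ε : ℤ}
    (h : ColHasSign (Cmat M w) k ε) : Cmat M (w ++ [k]) = Cmat M w * mutF k ε (Bmat M w) := by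
  ext i j
  simp only [Cmat_concat, mutF, mul_add, Matrix.add_apply, mul_rowSel_apply, colSel_mul_apply,
    matPos, of_apply, Matrix.neg_apply, Matrix.smul_apply, smul_eq_mul, add_assoc,
    Int.mul_max_add_max_neg_mul h.sign_eq (h.mul_nonneg i)]

lemma Gmat_concat_of_colHasSign {M : Mat n} {w : List (Fin n)} {k : Fin n} {ε : ℤ}
    (hdual : M * Cmat M w = Gmat M w * Bmat M w) (h : ColHasSign (Cmat M w) k ε) :
    Gmat M (w ++ [k]) = Gmat M w * mutE k ε (Bmat M w) := by
  obtain ⟨-, ⟨rfl, hC⟩ | ⟨rfl, hC⟩⟩ := h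
  · have hzero : colSel (matPos (-Cmat M w)) k = 0 := by
      ext i j
      by_cases hj : j = k <;> simp [colSel, matPos, hC i, hj]
    simp [Gmat_concat, hzero, mutE]
  · have hneg : colSel (matPos (-Cmat M w)) k = -(Cmat M w * single k k 1) := by
      ext i j
      by_cases hj : j = k <;> simp [colSel, matPos, hC i, hj]
    rw [Gmat_concat, hneg, mutE, colSel_eq_mul_single, colSel_eq_mul_single, neg_neg, one_smul,
      ← matPos_neg_add, mul_neg, ← mul_assoc, hdual]
    noncomm_ring

lemma mul_Cmat_eq_Gmat_mul_Bmat {M : Mat n} (hdiag : ∀ w k, Bmat M w k k = 0)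
    (hsign : ∀ w k, ∃ ε, ColHasSign (Cmat M w) k ε) (w : List (Fin n)) :
    M * Cmat M w = Gmat M w * Bmat M w := by
  induction w using List.reverseRecOn with
  | nil => simp [Cmat_nil, Gmat_nil, Bmat_nil]
  | append_singleton w k ih =>
    obtain ⟨ε, h⟩ := hsign w k
    rw [Cmat_concat_of_colHasSign h, Gmat_concat_of_colHasSign ih h, Bmat_concat,
      mutB_eq_mutE_mul_mul_mutF (hdiag w k) h.sign_eq, ← mul_assoc, ih]
    calc Gmat M w * Bmat M w * mutF k ε (Bmat M w)
        = Gmat M w * (mutE k ε (Bmat M w) * mutE k ε (Bmat M w)) * Bmat M w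
            * mutF k ε (Bmat M w) := by rw [mutE_mul_self (hdiag w k), mul_one]
      _ = _ := by noncomm_ring

lemma Gmat_mul_transpose_Cmat_neg_transpose {M : Mat n} (hdiag : ∀ w k, Bmat M w k k = 0)
    (hsign : ∀ w k, ∃ ε, ColHasSign (Cmat M w) k ε ∧ ColHasSign (Cmat (-Mᵀ) w) k ε)
    (w : List (Fin n)) : Gmat M w * (Cmat (-Mᵀ) w)ᵀ = 1 := by
  induction w using List.reverseRecOn with
  | nil => simp [Cmat_nil, Gmat_nil]
  | append_singleton w k ih =>
    obtain ⟨ε, hC, hD⟩ := hsign w k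
    have hdual := mul_Cmat_eq_Gmat_mul_Bmat hdiag (fun w k => (hsign w k).imp fun _ h => h.1) w
    rw [Gmat_concat_of_colHasSign hdual hC, Cmat_concat_of_colHasSign hD, transpose_mul,
      transpose_mutF, Bmat_neg_transpose, transpose_neg, transpose_transpose, mutE_neg_neg]
    calc Gmat M w * mutE k ε (Bmat M w) * (mutE k ε (Bmat M w) * (Cmat (-Mᵀ) w)ᵀ)
        = Gmat M w * (mutE k ε (Bmat M w) * mutE k ε (Bmat M w)) * (Cmat (-Mᵀ) w)ᵀ := by
          noncomm_ring
      _ = 1 := by rw [mutE_mul_self (hdiag w k), mul_one, ih]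

def ColSupportedAt (A : Mat n) (j p : Fin n) : Prop := ∀ i, i ≠ p → A i j = 0

lemma ColSupportedAt.mul_apply {D : Mat n} {m l : Fin n} (hD : ColSupportedAt D m l) (A : Mat n)
    (i : Fin n) : (A * D) i m = A i l * D l m := by
  rw [Matrix.mul_apply, Finset.sum_eq_single l (fun b _ hb => by rw [hD b hb, mul_zero])
    (by simp)]

lemma ColSupportedAt.isUnit_apply {D : Mat n} {m l : Fin n} (hD : ColSupportedAt D m l)
    (hu : IsUnit D) : IsUnit (D l m) := by
  obtain ⟨A, hA⟩ := hu.exists_left_inv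
  have := hD.mul_apply A m
  rw [hA, one_apply_eq] at this
  exact .of_mul_eq_one_right _ this.symm

lemma ColSupportedAt.of_mul_eq_one {A D : Mat n} {m l : Fin n} (hD : ColSupportedAt D m l)
    (h : A * D = 1) : ColSupportedAt A l m := by
  intro i hi
  have hunit := hD.isUnit_apply (.of_mul_eq_one_right _ h)
  have := hD.mul_apply A i
  rw [h, one_apply_ne hi] at this
  exact (mul_eq_zero.mp this.symm).resolve_right hunit.ne_zero

lemma ColSupportedAt.mul_single {C : Mat n} {m l : Fin n} (hC : ColSupportedAt C m l) :
    C * single m m 1 = C l m • single l m 1 := by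
  ext i j
  by_cases hj : j = m
  · subst hj
    by_cases hi : i = l
    · simp [hi]
    · simp [hC i hi, single_apply_of_row_ne (Ne.symm hi)]
  · simp [hj, single_apply_of_col_ne _ _ (Ne.symm hj)]

lemma mutF_mul_apply_of_ne {Y C : Mat n} {p : Fin n} (ε : ℤ) {i : Fin n} (hi : i ≠ p)
    (j : Fin n) : (mutF p ε Y * C) i j = C i j := by
  simp only [mutF, add_mul, Matrix.add_apply, Jmat_mul_apply, rowSel_mul]
  simp [rowSel, hi]

lemma mutF_mul_apply_self {Y C : Mat n} {p j : Fin n} (hY : Y p p = 0) (ε : ℤ)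
    (hC : ColSupportedAt C j p) : (mutF p ε Y * C) p j = -C p j := by
  simp only [mutF, add_mul, Matrix.add_apply, Jmat_mul_apply, rowSel_mul]
  simp [rowSel, hC.mul_apply, matPos, hY]

lemma colHasSign_ne_iff {Y C : Mat n} {p j : Fin n} {ε εX εC : ℤ} (hY : Y p p = 0)
    (hX : ColHasSign (mutF p ε Y * C) j εX) (hC : ColHasSign C j εC) :
    εX ≠ εC ↔ ColSupportedAt C j p := by
  constructor
  · intro hne i hi
    have hXi := hX.mul_nonneg i
    have := hC.mul_nonneg i
    rw [mutF_mul_apply_of_ne ε hi] at hXi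
    rcases hX.sign_eq with rfl | rfl <;> rcases hC.sign_eq with rfl | rfl <;> omega
  · rintro hsupp rfl
    obtain ⟨i, hi⟩ := hC.1
    have hp : C p j ≠ 0 := by
      by_cases h : i = p
      · rwa [← h]
      · exact absurd (hsupp i h) hi
    have hXp := hX.mul_nonneg p
    have := hC.mul_nonneg p
    rw [mutF_mul_apply_self hY ε hsupp] at hXp
    rcases hC.sign_eq with rfl | rfl <;> omega

lemma mutF_mul_mul_mutF_of_colSupportedAt {M C G B' : Mat n} {l m : Fin n} {σ η : ℤ}
    (hM : M l l = 0) (hB' : B' m m = 0) (hdual : mutB M l * C = G * B')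
    (hC : ColSupportedAt C m l) (hG : ColSupportedAt Gᵀ l m)
    (hηC : η * C l m = -1) (hσG : σ * G l m = 1) :
    mutF l σ M * C * mutF m η B' = mutF l (-σ) M * (C * mutF m (-η) B') := by
  set T := single l m 1 * B'
  have hGrow : rowSel G l = G l m • single l m 1 := by
    ext i j
    by_cases hi : i = l
    · by_cases hj : j = m
      · simp [rowSel, hi, hj]
      · have hGj : G l j = 0 := hG j hj
        simp [rowSel, hi, single_apply_of_col_ne _ _ (Ne.symm hj), hGj]
    · simp [rowSel, hi, single_apply_of_row_ne (Ne.symm hi)]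
  have hCrow : mutF l σ M * C * rowSel B' m = -(C l m • T) := by
    rw [rowSel_eq_single_mul, mul_assoc, ← mul_assoc C, hC.mul_single, smul_mul_assoc,
      mul_smul_comm, ← mul_assoc, mutF_mul_single hM, neg_mul, smul_neg]
  have hMrow : rowSel M l * C = -(G l m • T) := by
    rw [← neg_neg (rowSel M l), ← rowSel_mutB, neg_mul, rowSel_mul, hdual, ← rowSel_mul, hGrow,
      smul_mul_assoc]
  have hL : mutF l σ M * C * mutF m η B' = mutF l σ M * C * mutF m (-η) B' + T := by
    rw [mutF_eq_mutF_neg_add m η, mul_add, mul_smul_comm, hCrow, smul_neg, smul_smul, hηC]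
    simp
  have hR : mutF l (-σ) M * (C * mutF m (-η) B') = mutF l σ M * C * mutF m (-η) B' + T := by
    calc mutF l (-σ) M * (C * mutF m (-η) B')
        = mutF l σ M * C * mutF m (-η) B' - σ • (rowSel M l * C * mutF m (-η) B') := by
          rw [mutF_eq_mutF_neg_add l σ]; noncomm_ring
      _ = _ := by
          rw [hMrow, neg_mul, smul_mul_assoc, single_mul_mul_mutF hB', smul_neg, smul_smul, hσG]
          simp [T]
  rw [hL, hR]

structure IsSignCoherentClass (S : Set (Mat n)) : Prop where
  mutB_mem : ∀ M ∈ S, ∀ k, mutB M k ∈ S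
  neg_mem : ∀ M ∈ S, -M ∈ S
  transpose_mem : ∀ M ∈ S, Mᵀ ∈ S
  diag_eq_zero : ∀ M ∈ S, ∀ k, M k k = 0
  colHasSign : ∀ M ∈ S, ∀ w k, ∃ ε, ColHasSign (Cmat M w) k ε ∧ ColHasSign (Cmat (-Mᵀ) w) k ε

namespace IsSignCoherentClass

variable {S : Set (Mat n)} {M : Mat n}

lemma Bmat_mem (hS : IsSignCoherentClass S) (hM : M ∈ S) (w : List (Fin n)) : Bmat M w ∈ S := by
  induction w using List.reverseRecOn with
  | nil => exact hM
  | append_singleton w k ih => rw [Bmat_concat]; exact hS.mutB_mem _ ih k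

lemma neg_transpose_mem (hS : IsSignCoherentClass S) (hM : M ∈ S) : -Mᵀ ∈ S :=
  hS.neg_mem _ (hS.transpose_mem _ hM)

lemma mul_Cmat (hS : IsSignCoherentClass S) (hM : M ∈ S) (w : List (Fin n)) :
    M * Cmat M w = Gmat M w * Bmat M w :=
  mul_Cmat_eq_Gmat_mul_Bmat (fun w => hS.diag_eq_zero _ (hS.Bmat_mem hM w))
    (fun w k => (hS.colHasSign M hM w k).imp fun _ h => h.1) w

lemma Gmat_mul_transpose_Cmat (hS : IsSignCoherentClass S) (hM : M ∈ S) (w : List (Fin n)) :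
    Gmat M w * (Cmat (-Mᵀ) w)ᵀ = 1 :=
  Gmat_mul_transpose_Cmat_neg_transpose (fun w => hS.diag_eq_zero _ (hS.Bmat_mem hM w))
    (hS.colHasSign M hM) w

lemma isUnit_Cmat (hS : IsSignCoherentClass S) (hM : M ∈ S) (w : List (Fin n)) :
    IsUnit (Cmat M w) := by
  have h := hS.Gmat_mul_transpose_Cmat (hS.neg_transpose_mem hM) w
  rw [transpose_neg, transpose_transpose, neg_neg] at h
  exact (isUnit_transpose _).mp (.of_mul_eq_one_right _ h)

end IsSignCoherentClass

def SecondDualityAt (S : Set (Mat n)) (s : ℕ) : Prop :=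
  ∀ M ∈ S, ∀ w : List (Fin n), w.length = s → Gmat M w = (Cmat (Bmat M w)ᵀ w.reverse)ᵀ

/-- Mutation of the initial matrix: here `σ` is the sign of the `l`-th row of `G_v^{μ_l M}`,
read off through the second duality. -/
def InitialMutationAt (S : Set (Mat n)) (s : ℕ) : Prop :=
  ∀ M ∈ S, ∀ (l : Fin n) (v : List (Fin n)) (σ : ℤ), v.length = s →
    ColHasSign (Cmat (Bmat M (l :: v))ᵀ v.reverse) l σ →
    Cmat M (l :: v) = mutF l σ M * Cmat (mutB M l) v

variable {S : Set (Mat n)}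

lemma secondDualityAt_zero : SecondDualityAt S 0 := by
  intro M _ w hw
  rw [List.length_eq_zero_iff.mp hw]
  simp [Gmat_nil, Cmat_nil]

lemma initialMutationAt_zero : InitialMutationAt S 0 := by
  intro M _ l v σ hv hσ
  rw [List.length_eq_zero_iff.mp hv] at hσ ⊢
  rw [List.reverse_nil, Cmat_nil] at hσ
  obtain rfl := (colHasSign_one l).eq hσ
  have h1 : ColHasSign (Cmat M []) l 1 := colHasSign_one l
  rw [← List.nil_append [l], Cmat_concat_of_colHasSign h1]
  simp [Cmat_nil, Bmat_nil]

lemma secondDualityAt_succ (hS : IsSignCoherentClass S) {s : ℕ} (hP : SecondDualityAt S s)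
    (hF : InitialMutationAt S s) : SecondDualityAt S (s + 1) := by
  intro M hM w hw
  obtain ⟨w, k, rfl⟩ := (List.eq_nil_or_concat' w).resolve_left (by rintro rfl; simp at hw)
  replace hw : w.length = s := by simpa using hw
  set W := Bmat M w
  obtain ⟨ε, hε, -⟩ := hS.colHasSign M hM w k
  have hN : mutB Wᵀ k ∈ S := hS.mutB_mem _ (hS.transpose_mem _ (hS.Bmat_mem hM w)) k
  have hinit := hF _ hN k w.reverse ε (by simpa using hw) (by
    rwa [Bmat_cons, mutB_mutB, Bmat_transpose, Bmat_reverse, transpose_transpose,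
      List.reverse_reverse])
  rw [Gmat_concat_of_colHasSign (hS.mul_Cmat hM w) hε, Bmat_concat, List.reverse_concat,
    ← mutB_transpose, hinit, mutB_mutB, mutF_mutB, transpose_mul, ← hP M hM w hw,
    transpose_mutF, neg_neg, transpose_transpose]

/-- Through the second duality, the right-hand side says that the `l`-th row of `G_v^{μ_l M}` is
a multiple of the `m`-th unit vector. -/
lemma colHasSign_Cmat_cons_ne_iff (hS : IsSignCoherentClass S) {s : ℕ}
    (hP : SecondDualityAt S s) (hF : InitialMutationAt S s) {M : Mat n} (hM : M ∈ S)
    {l m : Fin n} {v : List (Fin n)} (hv : v.length = s) {η η' : ℤ}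
    (hX : ColHasSign (Cmat M (l :: v)) m η) (hC : ColHasSign (Cmat (mutB M l) v) m η') :
    η ≠ η' ↔ ColSupportedAt (Cmat (Bmat M (l :: v))ᵀ v.reverse) l m := by
  have hM' := hS.mutB_mem M hM l
  have hN := hS.neg_transpose_mem hM
  obtain ⟨η₁, hX₁, hXneg⟩ := hS.colHasSign M hM (l :: v) m
  obtain ⟨η₂, hC₂, hD⟩ := hS.colHasSign _ hM' v m
  obtain rfl := hX.eq hX₁
  obtain rfl := hC.eq hC₂
  obtain ⟨σ, hσ, -⟩ := hS.colHasSign _ (hS.transpose_mem _ (hS.Bmat_mem hN (l :: v))) v.reverse l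
  rw [hF _ hN l v σ hv hσ, mutB_neg_transpose] at hXneg
  have hinv := hS.Gmat_mul_transpose_Cmat hM' v
  rw [hP _ hM' v hv, ← transpose_mul, transpose_eq_one] at hinv
  rw [colHasSign_ne_iff (hS.diag_eq_zero _ hN l) hXneg hD, Bmat_cons]
  exact ⟨fun h => h.of_mul_eq_one (mul_eq_one_comm.mp hinv), fun h => h.of_mul_eq_one hinv⟩

lemma IsSignCoherentClass.mutF_mul_Cmat_mul_mutF (hS : IsSignCoherentClass S) {s : ℕ}
    (hP : SecondDualityAt S s) {M : Mat n} (hM : M ∈ S) {l m : Fin n} {v : List (Fin n)}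
    (hv : v.length = s) {σ η : ℤ}
    (hη : ColHasSign (mutF l σ M * Cmat (mutB M l) v) m η)
    (hσ : ColHasSign (Cmat (Bmat (mutB M l) v)ᵀ v.reverse) l σ)
    (hC : ColSupportedAt (Cmat (mutB M l) v) m l)
    (hZ : ColSupportedAt (Cmat (Bmat (mutB M l) v)ᵀ v.reverse) l m) :
    mutF l σ M * Cmat (mutB M l) v * mutF m η (Bmat (mutB M l) v)
      = mutF l (-σ) M * (Cmat (mutB M l) v * mutF m (-η) (Bmat (mutB M l) v)) := by
  have hM' := hS.mutB_mem M hM l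
  have hMll := hS.diag_eq_zero M hM l
  have hηC : η * Cmat (mutB M l) v l m = -1 := by
    have hu := (hC.isUnit_apply (hS.isUnit_Cmat hM' v)).neg
    rw [← mutF_mul_apply_self hMll σ hC] at hu
    have := hη.mul_eq_one hu
    rw [mutF_mul_apply_self hMll σ hC] at this
    linarith
  have hGZ := hP _ hM' v hv
  have hZunit := hS.isUnit_Cmat (hS.transpose_mem _ (hS.Bmat_mem hM' v)) v.reverse
  have hσG : σ * Gmat (mutB M l) v l m = 1 := by
    rw [hGZ, transpose_apply]
    exact hσ.mul_eq_one (hZ.isUnit_apply hZunit)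
  exact mutF_mul_mul_mutF_of_colSupportedAt hMll (hS.diag_eq_zero _ (hS.Bmat_mem hM' v) m)
    (hS.mul_Cmat hM' v) hC (by rwa [hGZ, transpose_transpose]) hηC hσG

lemma initialMutationAt_succ (hS : IsSignCoherentClass S) {s : ℕ} (hP : SecondDualityAt S s)
    (hF : InitialMutationAt S s) : InitialMutationAt S (s + 1) := by
  intro M hM l v σ' hv hσ'
  obtain ⟨v, m, rfl⟩ := (List.eq_nil_or_concat' v).resolve_left (by rintro rfl; simp at hv)
  replace hv : v.length = s := by simpa using hv
  set M' := mutB M l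
  set B' := Bmat M' v
  set Z := Cmat B'ᵀ v.reverse
  have hM' : M' ∈ S := hS.mutB_mem M hM l
  have hB'T : B'ᵀ ∈ S := hS.transpose_mem _ (hS.Bmat_mem hM' v)
  obtain ⟨η, hη, -⟩ := hS.colHasSign M hM (l :: v) m
  obtain ⟨η', hη', -⟩ := hS.colHasSign M' hM' v m
  obtain ⟨σ, hσ, -⟩ := hS.colHasSign _ hB'T v.reverse l
  have hX : Cmat M (l :: v) = mutF l σ M * Cmat M' v := hF M hM l v σ hv (by rwa [Bmat_cons])
  have hZ' : Cmat (Bmat M (l :: (v ++ [m])))ᵀ (v ++ [m]).reverse = mutF m (-η') B'ᵀ * Z := by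
    rw [Bmat_cons, Bmat_concat, List.reverse_concat, ← mutB_transpose,
      hF _ (hS.mutB_mem _ hB'T m) m v.reverse η' (by simpa using hv), mutB_mutB, mutF_mutB]
    rwa [Bmat_cons, mutB_mutB, Bmat_transpose, Bmat_reverse, transpose_transpose,
      List.reverse_reverse]
  rw [hZ'] at hσ'
  have hZflip := colHasSign_ne_iff (hS.diag_eq_zero _ hB'T m) hσ' hσ
  have hCflip := colHasSign_Cmat_cons_ne_iff hS hP hF hM hv hη hη'
  rw [Bmat_cons] at hCflip
  rw [← List.cons_append, Cmat_concat_of_colHasSign hη, Cmat_concat_of_colHasSign hη', hX,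
    Bmat_cons]
  by_cases hflip : η = η'
  · subst hflip
    obtain rfl : σ' = σ := by_contra fun h => hCflip.mpr (hZflip.mp h) rfl
    rw [mul_assoc]
  · have hZ := hCflip.mp hflip
    rw [hX] at hη
    have hC := (colHasSign_ne_iff (hS.diag_eq_zero M hM l) hη hη').mp hflip
    obtain rfl := hη.eq_neg_of_ne hη' hflip
    obtain rfl := hσ.eq_neg_of_ne hσ' (Ne.symm (hZflip.mpr hZ))
    exact hS.mutF_mul_Cmat_mul_mutF hP hM hv hη hσ hC hZ

lemma IsSignCoherentClass.Gmat_eq_transpose_Cmat (hS : IsSignCoherentClass S) {M : Mat n}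
    (hM : M ∈ S) (w : List (Fin n)) : Gmat M w = (Cmat (Bmat M w)ᵀ w.reverse)ᵀ := by
  have key : ∀ s, SecondDualityAt S s ∧ InitialMutationAt S s := by
    intro s
    induction s with
    | zero => exact ⟨secondDualityAt_zero, initialMutationAt_zero⟩
    | succ s ih =>
      exact ⟨secondDualityAt_succ hS ih.1 ih.2, initialMutationAt_succ hS ih.1 ih.2⟩
  exact (key w.length).1 M hM w rfl

lemma SignSkew.diag_eq_zero {B : Mat n} (h : SignSkew B) (k : Fin n) : B k k = 0 := by
  nlinarith [(h k k).1]

def mutationClass (B : Mat n) : Set (Mat n) :=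
  {M | (∃ v, M = Bmat B v) ∨ (∃ v, M = Bmat (-B) v)}

def mutationClassWithDuals (B : Mat n) : Set (Mat n) :=
  {M | ∃ N ∈ mutationClass B, M = N ∨ M = -Nᵀ}

lemma mutationClass_mutB {B M : Mat n} (hM : M ∈ mutationClass B) (k : Fin n) :
    mutB M k ∈ mutationClass B := by
  rcases hM with ⟨v, rfl⟩ | ⟨v, rfl⟩
  · exact .inl ⟨v ++ [k], (Bmat_concat B v k).symm⟩
  · exact .inr ⟨v ++ [k], (Bmat_concat (-B) v k).symm⟩

lemma mutationClass_neg {B M : Mat n} (hM : M ∈ mutationClass B) : -M ∈ mutationClass B := by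
  rcases hM with ⟨v, rfl⟩ | ⟨v, rfl⟩
  · exact .inr ⟨v, (Bmat_neg B v).symm⟩
  · exact .inl ⟨v, by rw [Bmat_neg, neg_neg]⟩

lemma isSignCoherentClass_mutationClassWithDuals {B : Mat n} (hB : TotSSS B)
    (hA : TheAssumption B) : IsSignCoherentClass (mutationClassWithDuals B) where
  mutB_mem := by
    rintro _ ⟨N, hN, rfl | rfl⟩ k
    · exact ⟨_, mutationClass_mutB hN k, .inl rfl⟩
    · exact ⟨_, mutationClass_mutB hN k, .inr (mutB_neg_transpose N k)⟩
  neg_mem := by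
    rintro _ ⟨N, hN, rfl | rfl⟩
    · exact ⟨_, mutationClass_neg hN, .inl rfl⟩
    · exact ⟨_, mutationClass_neg hN, .inr (by rw [transpose_neg])⟩
  transpose_mem := by
    rintro _ ⟨N, hN, rfl | rfl⟩
    · exact ⟨_, mutationClass_neg hN, .inr (by rw [transpose_neg, neg_neg])⟩
    · exact ⟨_, mutationClass_neg hN, .inl (by rw [transpose_neg, transpose_transpose])⟩
  diag_eq_zero := by
    have h : ∀ N ∈ mutationClass B, ∀ k, N k k = 0 := by
      rintro _ (⟨v, rfl⟩ | ⟨v, rfl⟩) k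
      · exact (hB v).diag_eq_zero k
      · simp [Bmat_neg, (hB v).diag_eq_zero k]
    rintro _ ⟨N, hN, rfl | rfl⟩ k
    · exact h _ hN k
    · simp [h N hN k]
  colHasSign := by
    rintro _ ⟨N, hN, rfl | rfl⟩ w k
    · exact hA _ hN w k
    · obtain ⟨ε, h, h'⟩ := hA N hN w k
      exact ⟨ε, h', by rwa [transpose_neg, transpose_transpose, neg_neg]⟩

/-- under the Assumption, every `G`-matrix is row sign-coherent. -/
theorem G_row_sign_coherent {n : ℕ} (B : Matrix (Fin n) (Fin n) ℤ) (hB : TotSSS B)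
    (hA : TheAssumption B) (w : List (Fin n)) (i : Fin n) :
    (∃ j, Gmat B w i j ≠ 0) ∧
    ((∀ j, 0 ≤ Gmat B w i j) ∨ (∀ j, Gmat B w i j ≤ 0)) := by
  have hS := isSignCoherentClass_mutationClassWithDuals hB hA
  have hBS : B ∈ mutationClassWithDuals B := ⟨B, .inl ⟨[], rfl⟩, .inl rfl⟩
  obtain ⟨ε, ⟨hnz, hsign⟩, -⟩ :=
    hS.colHasSign _ (hS.transpose_mem _ (hS.Bmat_mem hBS w)) w.reverse i
  simp only [hS.Gmat_eq_transpose_Cmat hBS w, transpose_apply]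
  exact ⟨hnz, hsign.imp And.right And.right⟩
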